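/- arXiv:2506.03649 — 5 statements merged into one kernel-verified Lean document; each statement's English description precedes it below -/
import Mathlib

section
/- If x(t), d(t), r(t) are differentiable functions on [0,T] satisfying x(t) ≥ x̲ for all t, d'(t) ≥ x̲ − β/ε with d(0) = d*, and r'(t) ≥ γ·d(t) − δ with r(0) ≥ 0, where γ·d* = δ and x̲ > β/ε with β, γ, δ, ε > 0, then any time τ ∈ [0,T] with r(τ) = 1 satisfies τ ≤ √(2/(γ(x̲ − β/ε))). -/
/-- Upper bound `T_r` on the time for `r` to reach its threshold 1 in stage rXD. -/
theorem stmt0 (T β γ δ ε xl dstar : ℝ) (x d r : ℝ → ℝ)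
    (hT : 0 ≤ T) (hβ : 0 < β) (hγ : 0 < γ) (hδ : 0 < δ) (hε : 0 < ε)
    (hdstar : γ * dstar = δ) (hxl : β / ε < xl)
    (hx : DifferentiableOn ℝ x (Set.Icc 0 T))
    (hd : DifferentiableOn ℝ d (Set.Icc 0 T))
    (hr : DifferentiableOn ℝ r (Set.Icc 0 T))
    (hxlb : ∀ t ∈ Set.Icc (0:ℝ) T, xl ≤ x t)
    (hd' : ∀ t ∈ Set.Icc (0:ℝ) T, xl - β / ε ≤ derivWithin d (Set.Icc 0 T) t)
    (hd0 : d 0 = dstar)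
    (hr' : ∀ t ∈ Set.Icc (0:ℝ) T, γ * d t - δ ≤ derivWithin r (Set.Icc 0 T) t)
    (hr0 : 0 ≤ r 0)
    (τ : ℝ) (hτ : τ ∈ Set.Icc (0:ℝ) T) (hrτ : r τ = 1) :
    τ ≤ Real.sqrt (2 / (γ * (xl - β / ε))) := by
  set m := xl - β / ε with hm
  have hm0 : 0 < m := sub_pos.mpr hxl
  set c := γ * m with hc
  have hc0 : 0 < c := mul_pos hγ hm0
  have hconv : Convex ℝ (Set.Icc (0:ℝ) T) := convex_Icc 0 T
  -- at interior points, functions are differentiable at and derivWithin = deriv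
  have hint : ∀ t ∈ interior (Set.Icc (0:ℝ) T), Set.Icc (0:ℝ) T ∈ nhds t := by
    intro t ht
    exact mem_interior_iff_mem_nhds.mp ht
  have hdda : ∀ t ∈ interior (Set.Icc (0:ℝ) T), DifferentiableAt ℝ d t := by
    intro t ht
    exact (hd t (interior_subset ht)).differentiableAt (hint t ht)
  have hdd' : ∀ t ∈ interior (Set.Icc (0:ℝ) T), m ≤ deriv d t := by
    intro t ht
    have := hd' t (interior_subset ht)
    rwa [derivWithin_of_mem_nhds (hint t ht)] at this
  -- Step 1: d t ≥ dstar + m * t on Icc 0 T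
  have hdlb : ∀ t ∈ Set.Icc (0:ℝ) T, dstar + m * t ≤ d t := by
    intro t ht
    have hmono : MonotoneOn (fun s => d s - m * s) (Set.Icc 0 T) := by
      apply monotoneOn_of_deriv_nonneg hconv
      · exact (hd.sub ((differentiable_id.const_mul m).differentiableOn)).continuousOn
      · intro s hs
        exact ((hdda s hs).sub ((differentiable_id.const_mul m) s)).differentiableWithinAt
      · intro s hs
        have hlin : HasDerivAt (fun u : ℝ => m * u) m s := by
          simpa using (hasDerivAt_id s).const_mul m
        have hder : deriv (fun u => d u - m * u) s = deriv d s - m :=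
          ((hdda s hs).hasDerivAt.sub hlin).deriv
        rw [hder]
        linarith [hdd' s hs]
    have h0 : (0:ℝ) ∈ Set.Icc (0:ℝ) T := ⟨le_refl 0, hT⟩
    have := hmono h0 ht ht.1
    simp only [mul_zero, sub_zero, hd0] at this
    linarith
  -- Step 2: r t ≥ r 0 + c * t^2 / 2 on Icc
  have hrda : ∀ t ∈ interior (Set.Icc (0:ℝ) T), DifferentiableAt ℝ r t := by
    intro t ht
    exact (hr t (interior_subset ht)).differentiableAt (hint t ht)
  have hrd' : ∀ t ∈ interior (Set.Icc (0:ℝ) T), c * t ≤ deriv r t := by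
    intro t ht
    have h1 := hr' t (interior_subset ht)
    rw [derivWithin_of_mem_nhds (hint t ht)] at h1
    have h2 := hdlb t (interior_subset ht)
    have : γ * (dstar + m * t) - δ ≤ γ * d t - δ := by nlinarith
    have h3 : γ * (dstar + m * t) - δ = c * t := by
      rw [hc]; ring_nf; linarith [hdstar]
    linarith
  have hq : Differentiable ℝ (fun s : ℝ => c * s ^ 2 / 2) := by
    fun_prop
  have hqderiv : ∀ s : ℝ, deriv (fun u : ℝ => c * u ^ 2 / 2) s = c * s := by
    intro s
    have h : HasDerivAt (fun u : ℝ => c * u ^ 2 / 2) (c * (2 * s ^ 1) / 2) s := by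
      exact ((hasDerivAt_pow 2 s).const_mul c).div_const 2
    have := h.deriv
    rw [this]; ring
  have hmono2 : MonotoneOn (fun s => r s - c * s ^ 2 / 2) (Set.Icc 0 T) := by
    apply monotoneOn_of_deriv_nonneg hconv
    · exact (hr.sub hq.differentiableOn).continuousOn
    · intro s hs
      exact ((hrda s hs).sub (hq s)).differentiableWithinAt
    · intro s hs
      have hq2 : HasDerivAt (fun u : ℝ => c * u ^ 2 / 2) (c * s) s := by
        have h : HasDerivAt (fun u : ℝ => c * u ^ 2 / 2) (c * (2 * s ^ 1) / 2) s :=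
          ((hasDerivAt_pow 2 s).const_mul c).div_const 2
        convert h using 1; ring
      have hder : deriv (fun u => r u - c * u ^ 2 / 2) s = deriv r s - c * s :=
        ((hrda s hs).hasDerivAt.sub hq2).deriv
      rw [hder]
      linarith [hrd' s hs]
  have h0 : (0:ℝ) ∈ Set.Icc (0:ℝ) T := ⟨le_refl 0, hT⟩
  have hineq := hmono2 h0 hτ hτ.1
  simp only at hineq
  have hcτ : c * τ ^ 2 / 2 ≤ 1 := by
    rw [hrτ] at hineq
    nlinarith
  have hτ2 : τ ^ 2 ≤ 2 / c := by
    rw [le_div_iff₀ hc0]; nlinarith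
  have := Real.sqrt_le_sqrt hτ2
  rwa [Real.sqrt_sq hτ.1] at this
end

section
/- Let ε, d* > 0 with εd* < 1, and let x, d be solutions of ẋ = 1 − εd, ḋ = x − βd with β > 0. Suppose at time t₀ we have d(t₀) = d*, ḋ(t₀) > 0 (i.e., x(t₀) > βd*). Then for t ≥ t₀, as long as d(t) ≤ 1/ε, both x and d are nondecreasing; in particular d must reach 1/ε before x can decrease below x(t₀) or d can return to d*. -/
/-!
The derivative of `x` is `1 - ε d ≥ 0` while `d ≤ 1/ε`, so `x` is nondecreasing. For `d` one needs
`x - β d > 0`: its derivative is `(1 - ε d) - β (x - β d)`, so with the integrating factor `e^{β t}`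
the product `(x - β d) e^{β t}` has derivative `(1 - ε d) e^{β t} ≥ 0`, and the positivity of
`x - β d` at `t₀` persists.
-/

open Set Real

theorem monotoneOn_Icc_of_hasDerivAt_nonneg {f f' : ℝ → ℝ} {a b : ℝ}
    (hf : ∀ t, HasDerivAt f (f' t) t) (hf' : ∀ t ∈ Ioo a b, 0 ≤ f' t) :
    MonotoneOn f (Icc a b) :=
  monotoneOn_of_hasDerivWithinAt_nonneg (convex_Icc a b)
    (fun t _ => (hf t).continuousAt.continuousWithinAt)
    (fun t _ => (hf t).hasDerivWithinAt) (by simpa only [interior_Icc] using hf')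

theorem hasDerivAt_mul_exp_const_mul {u : ℝ → ℝ} {u' t : ℝ} (β : ℝ) (hu : HasDerivAt u u' t) :
    HasDerivAt (fun s => u s * exp (β * s)) ((u' + β * u t) * exp (β * t)) t := by
  have hexp : HasDerivAt (fun s => exp (β * s)) (exp (β * t) * β) t :=
    ((hasDerivAt_id t).const_mul β).exp.congr_deriv (by simp)
  exact (hu.mul hexp).congr_deriv (by ring)

theorem pos_on_Icc_of_hasDerivAt_add_mul_nonneg {u u' : ℝ → ℝ} {a b β : ℝ}
    (hu : ∀ t, HasDerivAt u (u' t) t) (hu' : ∀ t ∈ Ioo a b, 0 ≤ u' t + β * u t) (ha : 0 < u a) :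
    ∀ t ∈ Icc a b, 0 < u t := by
  intro t ht
  have hmono : MonotoneOn (fun s => u s * exp (β * s)) (Icc a b) :=
    monotoneOn_Icc_of_hasDerivAt_nonneg (fun s => hasDerivAt_mul_exp_const_mul β (hu s))
      fun s hs => mul_nonneg (hu' s hs) (exp_pos _).le
  have hle : u a * exp (β * a) ≤ u t * exp (β * t) :=
    hmono (left_mem_Icc.2 (ht.1.trans ht.2)) ht ht.1
  exact pos_of_mul_pos_left ((mul_pos ha (exp_pos _)).trans_le hle) (exp_pos _).le

theorem stmt5_general (β ε dstar t₀ : ℝ) (x d : ℝ → ℝ)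
    (hε : 0 < ε)
    (hx : ∀ t, HasDerivAt x (1 - ε * d t) t)
    (hd : ∀ t, HasDerivAt d (x t - β * d t) t)
    (hdt0 : d t₀ = dstar) (hxt0 : β * dstar < x t₀) :
    ∀ t₁, t₀ ≤ t₁ → (∀ t ∈ Set.Icc t₀ t₁, d t ≤ 1 / ε) →
      MonotoneOn x (Set.Icc t₀ t₁) ∧ MonotoneOn d (Set.Icc t₀ t₁) ∧
        ∀ t ∈ Set.Icc t₀ t₁, x t₀ ≤ x t ∧ dstar ≤ d t := by
  intro t₁ ht₁ hle
  have hx' : ∀ t ∈ Ioo t₀ t₁, 0 ≤ 1 - ε * d t := fun t ht =>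
    sub_nonneg.2 ((le_div_iff₀' hε).1 (hle t (Ioo_subset_Icc_self ht)))
  have hxmono : MonotoneOn x (Icc t₀ t₁) := monotoneOn_Icc_of_hasDerivAt_nonneg hx hx'
  have hgap : ∀ t ∈ Icc t₀ t₁, 0 < x t - β * d t :=
    pos_on_Icc_of_hasDerivAt_add_mul_nonneg (β := β) (fun t => (hx t).sub ((hd t).const_mul β))
      (fun t ht => by simpa only [sub_add_cancel] using hx' t ht) (by rw [hdt0]; linarith)
  have hdmono : MonotoneOn d (Icc t₀ t₁) :=
    monotoneOn_Icc_of_hasDerivAt_nonneg hd fun t ht => (hgap t (Ioo_subset_Icc_self ht)).le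
  have ht₀ : t₀ ∈ Icc t₀ t₁ := left_mem_Icc.2 ht₁
  exact ⟨hxmono, hdmono, fun t ht => ⟨hxmono ht₀ ht ht.1, hdt0 ▸ hdmono ht₀ ht ht.1⟩⟩

/-- Monotonicity in stage rXD: as long as `d ≤ 1/ε`, both `x` and `d` are nondecreasing. -/
theorem stmt5 (β ε dstar t₀ : ℝ) (x d : ℝ → ℝ)
    (hβ : 0 < β) (hε : 0 < ε) (hdstar : 0 < dstar) (hεd : ε * dstar < 1)
    (hx : ∀ t, HasDerivAt x (1 - ε * d t) t)
    (hd : ∀ t, HasDerivAt d (x t - β * d t) t)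
    (hdt0 : d t₀ = dstar) (hxt0 : β * dstar < x t₀) :
    ∀ t₁, t₀ ≤ t₁ → (∀ t ∈ Set.Icc t₀ t₁, d t ≤ 1 / ε) →
      MonotoneOn x (Set.Icc t₀ t₁) ∧ MonotoneOn d (Set.Icc t₀ t₁) ∧
        ∀ t ∈ Set.Icc t₀ t₁, x t₀ ≤ x t ∧ dstar ≤ d t :=
  stmt5_general β ε dstar t₀ x d hε hx hd hdt0 hxt0
end

section
/- Let β, ε, d* > 0 and x₁ > 0, and define t₂ = x₁/(εd*), b₀ = x₁/β + εd*/β², b₁ = εd*/β, b₂ = −εd*/β². Then b₀ + b₁t₂ + b₂·exp(−βt₂) > x₁(1/β − x₁/(2εd*)). Consequently, if x₁(1/β − x₁/(2εd*)) > d*, then b₀ + b₁t₂ + b₂·exp(−βt₂) > d*. -/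
/-- Key inequality in the final-condition theorem: the Jordan curve endpoint value
`d_p(t₂) = b₀ + b₁t₂ + b₂ e^{−βt₂}` exceeds `x₁(1/β − x₁/(2εd*))`, hence exceeds `d*`
whenever the latter does. -/
theorem stmt11 (β ε dstar x₁ : ℝ) (hβ : 0 < β) (hε : 0 < ε) (hdstar : 0 < dstar)
    (hx₁ : 0 < x₁) :
    x₁ * (1 / β - x₁ / (2 * ε * dstar)) <
      (x₁ / β + ε * dstar / β ^ 2) + ε * dstar / β * (x₁ / (ε * dstar))
        + (-(ε * dstar / β ^ 2)) * Real.exp (-β * (x₁ / (ε * dstar))) ∧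
    (dstar < x₁ * (1 / β - x₁ / (2 * ε * dstar)) →
      dstar < (x₁ / β + ε * dstar / β ^ 2) + ε * dstar / β * (x₁ / (ε * dstar))
        + (-(ε * dstar / β ^ 2)) * Real.exp (-β * (x₁ / (ε * dstar)))) := by
  have hεd : 0 < ε * dstar := mul_pos hε hdstar
  have hE1 : Real.exp (-β * (x₁ / (ε * dstar))) ≤ 1 := by
    apply Real.exp_le_one_iff.mpr
    have : 0 < x₁ / (ε * dstar) := div_pos hx₁ hεd
    nlinarith
  have hc : 0 < ε * dstar / β ^ 2 := div_pos hεd (by positivity)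
  have hsimp : ε * dstar / β * (x₁ / (ε * dstar)) = x₁ / β := by
    field_simp
  have hmain : x₁ * (1 / β - x₁ / (2 * ε * dstar)) <
      (x₁ / β + ε * dstar / β ^ 2) + ε * dstar / β * (x₁ / (ε * dstar))
        + (-(ε * dstar / β ^ 2)) * Real.exp (-β * (x₁ / (ε * dstar))) := by
    rw [hsimp]
    have h1 : x₁ * (1 / β - x₁ / (2 * ε * dstar)) < x₁ / β := by
      have : 0 < x₁ / (2 * ε * dstar) := div_pos hx₁ (by positivity)
      have hxb : 0 < x₁ / β := div_pos hx₁ hβ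
      calc x₁ * (1 / β - x₁ / (2 * ε * dstar)) < x₁ * (1 / β) := by
            apply mul_lt_mul_of_pos_left _ hx₁
            linarith
        _ = x₁ / β := by ring
    have h2 : (ε * dstar / β ^ 2) * (1 - Real.exp (-β * (x₁ / (ε * dstar)))) ≥ 0 :=
      mul_nonneg hc.le (by linarith)
    have hxb : 0 < x₁ / β := div_pos hx₁ hβ
    nlinarith
  exact ⟨hmain, fun h => lt_trans h hmain⟩
end

section
/- In the region r < 1, x > 0, d > d* of the system ẋ = 1 − εd, ḋ = x − βd, ṙ = γd − δr (with β, γ, δ, ε > 0, d* = δ/γ, εd* < 1): if at entry ḋ > 0 (equivalently x > βd*) and r₀ ∈ [0, 1), and if T_r := √(2/(γ(x̲ − β/ε))) < T_d := (√(G² + 2H²/ε) − G)/H where H = 1 − εd*, G = x̄ − βd*, x̲ ≤ x(entry) ≤ x̄ and x̲ > β/ε, then r reaches the value 1 before d reaches 1/ε, hence before d can return to d* or x can reach 0; i.e., the only possible transition is to the region r > 1, x > 0, d > d*. -/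
/-! As long as `d < 1/ε`, `x` increases, so `x ≥ x̲` and `ḋ ≥ x̲ - β/ε =: c > 0`; in particular
`d ≥ d*`, hence `ẋ ≤ H` and `ḋ ≤ G + H t`, giving `d ≤ d* + G t + H t²/2`. This quadratic stays
below `d* + H/ε = 1/ε` for `t < T_d`, so a first-crossing argument keeps `d < 1/ε` on `[0, T_r]`.
There `ṙ = γ d - δ r ≥ γ c t + δ (1 - r) ≥ γ c t` while `r ≤ 1`, so `r ≥ r₀ + γ c t²/2`, which
reaches `1` by `T_r = √(2/(γ c))`; the first time `r = 1` is the exit time. -/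

open Set

theorem sub_le_sub_of_hasDerivAt_le {f g f' g' : ℝ → ℝ} {a b : ℝ}
    (hf : ∀ t ∈ Icc a b, HasDerivAt f (f' t) t) (hg : ∀ t ∈ Icc a b, HasDerivAt g (g' t) t)
    (hle : ∀ t ∈ Ioo a b, f' t ≤ g' t) : ∀ t ∈ Icc a b, f t - f a ≤ g t - g a := by
  have hmono : MonotoneOn (fun t => g t - f t) (Icc a b) := by
    refine monotoneOn_of_hasDerivWithinAt_nonneg (f' := fun t => g' t - f' t) (convex_Icc a b)
      (fun t ht => ((hg t ht).sub (hf t ht)).continuousAt.continuousWithinAt)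
      (fun t ht => ?_) (fun t ht => ?_)
    · rw [interior_Icc] at ht ⊢
      exact ((hg t (Ioo_subset_Icc_self ht)).sub (hf t (Ioo_subset_Icc_self ht))).hasDerivWithinAt
    · rw [interior_Icc] at ht
      exact sub_nonneg.2 (hle t ht)
  intro t ht
  have := hmono (left_mem_Icc.2 (ht.1.trans ht.2)) ht ht.1
  dsimp only at this
  linarith

theorem hasDerivAt_quadratic (p q t : ℝ) :
    HasDerivAt (fun s => p * s + q * s ^ 2 / 2) (p + q * t) t := by
  refine (((hasDerivAt_id' t).const_mul p).add
    (((hasDerivAt_pow 2 t).const_mul q).div_const 2)).congr_deriv ?_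
  push_cast
  ring

theorem image_le_add_quadratic_of_deriv_le {f f' : ℝ → ℝ} {T p q : ℝ}
    (hf : ∀ t ∈ Icc 0 T, HasDerivAt f (f' t) t) (hle : ∀ t ∈ Ioo 0 T, f' t ≤ p + q * t) :
    ∀ t ∈ Icc 0 T, f t ≤ f 0 + p * t + q * t ^ 2 / 2 := by
  intro t ht
  have := sub_le_sub_of_hasDerivAt_le hf (fun s _ => hasDerivAt_quadratic p q s) hle t ht
  linarith

theorem add_quadratic_le_image_of_le_deriv {f f' : ℝ → ℝ} {T p q : ℝ}
    (hf : ∀ t ∈ Icc 0 T, HasDerivAt f (f' t) t) (hle : ∀ t ∈ Ioo 0 T, p + q * t ≤ f' t) :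
    ∀ t ∈ Icc 0 T, f 0 + p * t + q * t ^ 2 / 2 ≤ f t := by
  intro t ht
  have := sub_le_sub_of_hasDerivAt_le (fun s _ => hasDerivAt_quadratic p q s) hf hle t ht
  linarith

theorem exists_first_hitting_time {g : ℝ → ℝ} {a b L : ℝ} (hg : ContinuousOn g (Icc a b))
    (ha : g a < L) (hL : ∃ t ∈ Icc a b, L ≤ g t) :
    ∃ τ ∈ Ioc a b, g τ = L ∧ ∀ s ∈ Ico a τ, g s < L := by
  set E := {t ∈ Icc a b | L ≤ g t}
  have hE : IsClosed E := hg.preimage_isClosed_of_isClosed isClosed_Icc isClosed_Ici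
  have hEbdd : BddBelow E := ⟨a, fun t ht => ht.1.1⟩
  have hτ : sInf E ∈ E := hE.csInf_mem hL hEbdd
  have hτa : a < sInf E := hτ.1.1.lt_of_ne fun h => (h ▸ ha).not_ge hτ.2
  have hbefore : ∀ s ∈ Ico a (sInf E), g s < L := fun s hs =>
    not_le.1 fun h => (csInf_le hEbdd ⟨⟨hs.1, hs.2.le.trans hτ.1.2⟩, h⟩).not_gt hs.2
  obtain ⟨s, hs, hgs⟩ := intermediate_value_Icc hτa.le (hg.mono (Icc_subset_Icc_right hτ.1.2))
    ⟨ha.le, hτ.2⟩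
  have hsτ : s = sInf E :=
    le_antisymm hs.2 (csInf_le hEbdd ⟨⟨hs.1, hs.2.trans hτ.1.2⟩, hgs.ge⟩)
  exact ⟨sInf E, ⟨hτa, hτ.1.2⟩, hsτ ▸ hgs, hbefore⟩

theorem quadratic_lt_of_lt_pos_root {G H ε t : ℝ} (hH : 0 < H) (hε : 0 < ε) (ht0 : 0 ≤ t)
    (ht : t < (√(G ^ 2 + 2 * H ^ 2 / ε) - G) / H) : G * t + H * t ^ 2 / 2 < H / ε := by
  set s := √(G ^ 2 + 2 * H ^ 2 / ε)
  have hs : s ^ 2 = G ^ 2 + 2 * H ^ 2 / ε := Real.sq_sqrt (by positivity)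
  have hGs : |G| < s := by
    refine abs_lt_of_sq_lt_sq ?_ (Real.sqrt_nonneg _)
    rw [hs]
    linarith [show 0 < 2 * H ^ 2 / ε by positivity]
  have hlt : H * t + G < s := by rw [lt_div_iff₀ hH] at ht; linarith
  have hgt : -s < H * t + G := by have := neg_abs_le G; nlinarith
  have hsq := sq_lt_sq' hgt hlt
  rw [hs] at hsq
  have : 2 * H * (G * t + H * t ^ 2 / 2) < 2 * H * (H / ε) := by
    have : 2 * H * (H / ε) = 2 * H ^ 2 / ε := by ring
    nlinarith
  exact lt_of_mul_lt_mul_left this (by positivity)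

section Trajectory

variable {β γ δ ε T : ℝ} {x d r : ℝ → ℝ}

theorem x_zero_le_of_lt_inv (hε : 0 < ε)
    (hx : ∀ t, 0 ≤ t → HasDerivAt x (1 - ε * d t) t)
    (hlt : ∀ t ∈ Ico 0 T, d t < 1 / ε) : ∀ t ∈ Icc 0 T, x 0 ≤ x t := by
  intro t ht
  have := add_quadratic_le_image_of_le_deriv (p := 0) (q := 0) (fun s hs => hx s hs.1)
    (fun s hs => ?_) t ht
  · linarith
  · have := (lt_div_iff₀ hε).1 (hlt s (Ioo_subset_Ico_self hs))
    linarith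

theorem d_zero_add_mul_le_of_lt_inv (hβ : 0 ≤ β) (hε : 0 < ε)
    (hx : ∀ t, 0 ≤ t → HasDerivAt x (1 - ε * d t) t)
    (hd : ∀ t, 0 ≤ t → HasDerivAt d (x t - β * d t) t) (hlt : ∀ t ∈ Ico 0 T, d t < 1 / ε) :
    ∀ t ∈ Icc 0 T, d 0 + (x 0 - β / ε) * t ≤ d t := by
  intro t ht
  have := add_quadratic_le_image_of_le_deriv (p := x 0 - β / ε) (q := 0)
    (fun s hs => hd s hs.1) (fun s hs => ?_) t ht
  · linarith
  · have hxs := x_zero_le_of_lt_inv hε hx hlt s (Ioo_subset_Icc_self hs)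
    have hds : β * d s ≤ β * (1 / ε) :=
      mul_le_mul_of_nonneg_left (hlt s (Ioo_subset_Ico_self hs)).le hβ
    rw [mul_one_div] at hds
    linarith

theorem d_le_quadratic_of_d_zero_le (hβ : 0 ≤ β) (hε : 0 ≤ ε)
    (hx : ∀ t, 0 ≤ t → HasDerivAt x (1 - ε * d t) t)
    (hd : ∀ t, 0 ≤ t → HasDerivAt d (x t - β * d t) t) (hd0 : ∀ t ∈ Icc 0 T, d 0 ≤ d t) :
    ∀ t ∈ Icc 0 T, d t ≤ d 0 + (x 0 - β * d 0) * t + (1 - ε * d 0) * t ^ 2 / 2 := by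
  have hxup := image_le_add_quadratic_of_deriv_le (p := 1 - ε * d 0) (q := 0)
    (fun s hs => hx s hs.1) (fun s hs => by
      nlinarith [mul_le_mul_of_nonneg_left (hd0 s (Ioo_subset_Icc_self hs)) hε])
  refine image_le_add_quadratic_of_deriv_le (fun s hs => hd s hs.1) (fun s hs => ?_)
  have := hxup s (Ioo_subset_Icc_self hs)
  nlinarith [mul_le_mul_of_nonneg_left (hd0 s (Ioo_subset_Icc_self hs)) hβ]

theorem d_lt_inv_of_quadratic_lt (hβ : 0 ≤ β) (hε : 0 < ε)
    (hx : ∀ t, 0 ≤ t → HasDerivAt x (1 - ε * d t) t)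
    (hd : ∀ t, 0 ≤ t → HasDerivAt d (x t - β * d t) t) (hx0 : β / ε < x 0)
    (hT : ∀ t ∈ Icc 0 T, d 0 + (x 0 - β * d 0) * t + (1 - ε * d 0) * t ^ 2 / 2 < 1 / ε) :
    ∀ t ∈ Icc 0 T, d t < 1 / ε := by
  by_contra! ⟨t₀, ht₀, hdt₀⟩
  obtain ⟨t₁, ht₁, hdt₁, hbefore⟩ := exists_first_hitting_time
    (fun t ht => (hd t ht.1).continuousAt.continuousWithinAt)
    (by simpa using hT 0 ⟨le_rfl, ht₀.1.trans ht₀.2⟩)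
    ⟨t₀, right_mem_Icc.2 ht₀.1, hdt₀⟩
  have hd0 : ∀ t ∈ Icc 0 t₁, d 0 ≤ d t := fun t ht => by
    nlinarith [d_zero_add_mul_le_of_lt_inv hβ hε hx hd hbefore t ht, ht.1]
  have := d_le_quadratic_of_d_zero_le hβ hε.le hx hd hd0 t₁ (right_mem_Icc.2 ht₁.1.le)
  linarith [hT t₁ ⟨ht₁.1.le, ht₁.2.trans ht₀.2⟩]

theorem r_zero_add_quadratic_le {k : ℝ} (hδ : 0 ≤ δ)
    (hr : ∀ t, 0 ≤ t → HasDerivAt r (γ * d t - δ * r t) t)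
    (hdr : ∀ t ∈ Ioo 0 T, δ + k * t ≤ γ * d t) (hr1 : ∀ t ∈ Ioo 0 T, r t ≤ 1) :
    ∀ t ∈ Icc 0 T, r 0 + k * t ^ 2 / 2 ≤ r t := by
  intro t ht
  have := add_quadratic_le_image_of_le_deriv (p := 0) (q := k) (fun s hs => hr s hs.1)
    (fun s hs => by nlinarith [mul_le_mul_of_nonneg_left (hr1 s hs) hδ, hdr s hs]) t ht
  linarith

theorem exists_first_r_eq_one {k : ℝ} (hδ : 0 ≤ δ)
    (hr : ∀ t, 0 ≤ t → HasDerivAt r (γ * d t - δ * r t) t)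
    (hdr : ∀ t ∈ Ioo 0 T, δ + k * t ≤ γ * d t) (hT : 0 ≤ T) (hkT : 1 ≤ k * T ^ 2 / 2)
    (hr0 : 0 ≤ r 0) (hr0' : r 0 < 1) :
    ∃ τ ∈ Ioc 0 T, r τ = 1 ∧ ∀ t ∈ Ico 0 τ, r t < 1 := by
  refine exists_first_hitting_time (fun t ht => (hr t ht.1).continuousAt.continuousWithinAt)
    hr0' ?_
  by_contra! hrlt
  have := r_zero_add_quadratic_le hδ hr hdr (fun t ht => (hrlt t (Ioo_subset_Icc_self ht)).le)
    T (right_mem_Icc.2 hT)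
  linarith [hrlt T (right_mem_Icc.2 hT)]

end Trajectory

theorem stmt15_general (β γ δ ε dstar H G xl xbar : ℝ) (x d r : ℝ → ℝ)
    (hβ : 0 < β) (hγ : 0 < γ) (hδ : 0 < δ) (hε : 0 < ε)
    (hdstar : dstar = δ / γ) (hεd : ε * dstar < 1)
    (hH : H = 1 - ε * dstar) (hG : G = xbar - β * dstar)
    (hx : ∀ t : ℝ, 0 ≤ t → HasDerivAt x (1 - ε * d t) t)
    (hd : ∀ t : ℝ, 0 ≤ t → HasDerivAt d (x t - β * d t) t)
    (hr : ∀ t : ℝ, 0 ≤ t → HasDerivAt r (γ * d t - δ * r t) t)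
    (hd0 : d 0 = dstar) (hx0l : xl ≤ x 0) (hx0u : x 0 ≤ xbar)
    (hr0 : 0 ≤ r 0) (hr0' : r 0 < 1)
    (hxl : β / ε < xl)
    (hTrTd : Real.sqrt (2 / (γ * (xl - β / ε))) <
      (Real.sqrt (G ^ 2 + 2 * H ^ 2 / ε) - G) / H) :
    ∃ τ > 0, r τ = 1 ∧ ∀ t ∈ Set.Icc 0 τ,
      0 < x t ∧ dstar ≤ d t ∧ d t < 1 / ε ∧ r t ≤ 1 := by
  set c := xl - β / ε
  set Tr := √(2 / (γ * c))
  have hc : 0 < c := sub_pos.2 hxl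
  have hTr : γ * c * Tr ^ 2 / 2 = 1 := by
    rw [Real.sq_sqrt (by positivity)]; field_simp
  have hHε : H / ε = 1 / ε - dstar := by rw [hH]; field_simp
  have hdlt : ∀ t ∈ Icc 0 Tr, d t < 1 / ε := by
    refine d_lt_inv_of_quadratic_lt hβ.le hε hx hd (hxl.trans_le hx0l) fun t ht => ?_
    have := quadratic_lt_of_lt_pos_root (by linarith) hε ht.1 (ht.2.trans_lt hTrTd)
    rw [hd0, ← hH]
    nlinarith [ht.1]
  have hdlt' : ∀ t ∈ Ico 0 Tr, d t < 1 / ε := fun t ht => hdlt t (Ico_subset_Icc_self ht)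
  have hdlow : ∀ t ∈ Icc 0 Tr, dstar + c * t ≤ d t := fun t ht => by
    nlinarith [d_zero_add_mul_le_of_lt_inv hβ.le hε hx hd hdlt' t ht, ht.1]
  have hγd : γ * dstar = δ := by rw [hdstar]; field_simp
  obtain ⟨τ, hτ, hrτ, hbefore⟩ := exists_first_r_eq_one hδ.le hr
    (fun t ht => by nlinarith [hdlow t (Ioo_subset_Icc_self ht)]) (Real.sqrt_nonneg _) hTr.ge
    hr0 hr0'
  refine ⟨τ, hτ.1, hrτ, fun t ht => ?_⟩
  have htTr : t ∈ Icc 0 Tr := ⟨ht.1, ht.2.trans hτ.2⟩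
  refine ⟨?_, ?_, hdlt t htTr, ?_⟩
  · linarith [x_zero_le_of_lt_inv hε hx hdlt' t htTr, div_pos hβ hε]
  · nlinarith [hdlow t htTr, ht.1]
  · rcases ht.2.lt_or_eq with h | rfl
    exacts [(hbefore t ⟨ht.1, h⟩).le, hrτ.le]

/-- Theorem 1: if `T_r < T_d`, a trajectory entering region rXD exits through `r = 1`,
before `d` can reach `1/ε`, return to `d*`, or `x` reach 0. -/
theorem stmt15 (β γ δ ε dstar H G xl xbar : ℝ) (x d r : ℝ → ℝ)
    (hβ : 0 < β) (hγ : 0 < γ) (hδ : 0 < δ) (hε : 0 < ε)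
    (hdstar : dstar = δ / γ) (hεd : ε * dstar < 1)
    (hH : H = 1 - ε * dstar) (hG : G = xbar - β * dstar)
    (hx : ∀ t : ℝ, 0 ≤ t → HasDerivAt x (1 - ε * d t) t)
    (hd : ∀ t : ℝ, 0 ≤ t → HasDerivAt d (x t - β * d t) t)
    (hr : ∀ t : ℝ, 0 ≤ t → HasDerivAt r (γ * d t - δ * r t) t)
    (hd0 : d 0 = dstar) (hx0l : xl ≤ x 0) (hx0u : x 0 ≤ xbar)
    (hentry : β * dstar < x 0) (hr0 : 0 ≤ r 0) (hr0' : r 0 < 1)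
    (hxl : β / ε < xl)
    (hTrTd : Real.sqrt (2 / (γ * (xl - β / ε))) <
      (Real.sqrt (G ^ 2 + 2 * H ^ 2 / ε) - G) / H) :
    ∃ τ > 0, r τ = 1 ∧ ∀ t ∈ Set.Icc 0 τ,
      0 < x t ∧ dstar ≤ d t ∧ d t < 1 / ε ∧ r t ≤ 1 :=
  stmt15_general β γ δ ε dstar H G xl xbar x d r hβ hγ hδ hε hdstar hεd hH hG hx hd hr hd0 hx0l hx0u
    hr0 hr0' hxl hTrTd
end

section
/- In the piecewise affine system ẋ = h_s(r) − εd, ḋ = max(x,0) − βd, ṙ = γd − δr, any two trajectories whose x-components agree wherever x ≥ 0 but differ only while x < 0 have identical d and r components for all time; consequently, an instantaneous perturbation applied to x at a time when x < 0 and which keeps x < 0 until the next upward crossing of x through 0 does not change the subsequent times at which d and r cross their thresholds, i.e., produces zero asymptotic phase shift. -/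
/-! The `d`-equation is linear in `d` and sees `x` only through the forcing `max x 0`, so `d` is
determined by that forcing and `d 0`; likewise `r` is determined by `d` and `r 0`. -/

theorem eq_of_hasDerivAt_sub_mul_self {c : ℝ} {u f g : ℝ → ℝ} {t₀ : ℝ}
    (hf : ∀ t, HasDerivAt f (u t - c * f t) t) (hg : ∀ t, HasDerivAt g (u t - c * g t) t)
    (h : f t₀ = g t₀) : f = g := by
  have hLip : ∀ t, LipschitzWith ‖c‖₊ (fun y => u t - c * y) := fun t => by
    simpa using (LipschitzWith.const (u t)).sub (lipschitzWith_smul (β := ℝ) c)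
  exact ODE_solution_unique_univ (fun t => (hLip t).lipschitzOnWith (s := Set.univ))
    (fun t => ⟨hf t, trivial⟩) (fun t => ⟨hg t, trivial⟩) h

theorem stmt19_general (β γ δ : ℝ) (x₁ d₁ r₁ x₂ d₂ r₂ : ℝ → ℝ)
    (hd₁ : ∀ t, HasDerivAt d₁ (max (x₁ t) 0 - β * d₁ t) t)
    (hr₁ : ∀ t, HasDerivAt r₁ (γ * d₁ t - δ * r₁ t) t)
    (hd₂ : ∀ t, HasDerivAt d₂ (max (x₂ t) 0 - β * d₂ t) t)
    (hr₂ : ∀ t, HasDerivAt r₂ (γ * d₂ t - δ * r₂ t) t)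
    (h0d : d₁ 0 = d₂ 0) (h0r : r₁ 0 = r₂ 0)
    (hagree : ∀ t, max (x₁ t) 0 = max (x₂ t) 0) :
    ∀ t : ℝ, 0 ≤ t → d₁ t = d₂ t ∧ r₁ t = r₂ t := by
  have hd : d₁ = d₂ := eq_of_hasDerivAt_sub_mul_self hd₁ (fun t => hagree t ▸ hd₂ t) h0d
  have hr : r₁ = r₂ := eq_of_hasDerivAt_sub_mul_self hr₁ (fun t => hd ▸ hr₂ t) h0r
  exact fun t _ => ⟨congrFun hd t, congrFun hr t⟩

/-- Dead-zone property: two trajectories of the PWA system whose `x`-components agree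
wherever `x ≥ 0` (i.e. `max x 0` agrees) and share initial `d`, `r` have identical
`d` and `r` components for all time — perturbations of `x` while `x < 0` do not
propagate, producing zero phase shift. -/
theorem stmt19 (β γ δ ε : ℝ) (x₁ d₁ r₁ x₂ d₂ r₂ : ℝ → ℝ)
    (hx₁ : ∀ t, HasDerivAt x₁ ((if r₁ t < 1 then (1:ℝ) else 0) - ε * d₁ t) t)
    (hd₁ : ∀ t, HasDerivAt d₁ (max (x₁ t) 0 - β * d₁ t) t)
    (hr₁ : ∀ t, HasDerivAt r₁ (γ * d₁ t - δ * r₁ t) t)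
    (hx₂ : ∀ t, HasDerivAt x₂ ((if r₂ t < 1 then (1:ℝ) else 0) - ε * d₂ t) t)
    (hd₂ : ∀ t, HasDerivAt d₂ (max (x₂ t) 0 - β * d₂ t) t)
    (hr₂ : ∀ t, HasDerivAt r₂ (γ * d₂ t - δ * r₂ t) t)
    (h0d : d₁ 0 = d₂ 0) (h0r : r₁ 0 = r₂ 0)
    (hagree : ∀ t, max (x₁ t) 0 = max (x₂ t) 0) :
    ∀ t : ℝ, 0 ≤ t → d₁ t = d₂ t ∧ r₁ t = r₂ t :=
  stmt19_general β γ δ x₁ d₁ r₁ x₂ d₂ r₂ hd₁ hr₁ hd₂ hr₂ h0d h0r hagree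
end
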